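/- arXiv:2003.04750 — 4 statements merged into one kernel-verified Lean document; each statement's English description precedes it below -/
import Mathlib

section
/- A nonempty open subset of the Cantor set is homeomorphic to the Cantor set if it is compact, and is homeomorphic to the Cantor set minus a point if it is not compact. -/
/-!
Every point of an open set `U ⊆ ℕ → Bool` lies in a largest cylinder contained in `U`. Two
cylinders that meet are nested, so these maximal cylinders partition `U` into countably many
clopen copies of the Cantor space, finitely many exactly when `U` is compact. Since the Cantor
space is homeomorphic to two copies of itself, any nonzero finite number of copies is again the
Cantor space, while any two countably infinite sums of copies are homeomorphic; `{p}ᶜ` is one of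
the latter, being open and, as `p` is not isolated, not compact.
-/

universe u

open Set Function

section Sigma

variable {ι κ : Type*}

noncomputable def Set.iUnionHomeomorphSigmaOfDisjoint {X : Type*} [TopologicalSpace X]
    {t : ι → Set X} (ht : ∀ i, IsOpen (t i)) (hd : Pairwise (Disjoint on t)) :
    (⋃ i, t i) ≃ₜ Σ i, t i :=
  Homeomorph.symm <|
    (Equiv.ofBijective _ (sigmaToiUnion_bijective t hd)).toHomeomorphOfContinuousOpen
      (continuous_sigma fun i => continuous_inclusion (subset_iUnion t i))
      (isOpenMap_sigma.2 fun i => (ht i).isOpenMap_inclusion (subset_iUnion t i))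

def Homeomorph.sigmaConstCongrLeft (e : ι ≃ κ) (Y : Type*) [TopologicalSpace Y] :
    (Σ _ : ι, Y) ≃ₜ Σ _ : κ, Y where
  toFun p := ⟨e p.1, p.2⟩
  invFun p := ⟨e.symm p.1, p.2⟩
  left_inv p := by simp
  right_inv p := by simp
  continuous_toFun := continuous_sigma fun i => continuous_sigmaMk (σ := fun _ => Y) (i := e i)
  continuous_invFun :=
    continuous_sigma fun k => continuous_sigmaMk (σ := fun _ => Y) (i := e.symm k)

def Homeomorph.sigmaCongrRight {X Y : ι → Type*} [∀ i, TopologicalSpace (X i)]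
    [∀ i, TopologicalSpace (Y i)] (e : ∀ i, X i ≃ₜ Y i) : (Σ i, X i) ≃ₜ Σ i, Y i where
  toEquiv := Equiv.sigmaCongrRight fun i => (e i).toEquiv
  continuous_toFun := continuous_sigma fun i => continuous_sigmaMk.comp (e i).continuous
  continuous_invFun := continuous_sigma fun i => continuous_sigmaMk.comp (e i).symm.continuous

def Homeomorph.sigmaEquivProd (ι Y : Type*) [TopologicalSpace ι] [DiscreteTopology ι]
    [TopologicalSpace Y] : (Σ _ : ι, Y) ≃ₜ ι × Y where
  toEquiv := Equiv.sigmaEquivProd ι Y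
  continuous_toFun := continuous_sigma fun _ => continuous_const.prodMk continuous_id
  continuous_invFun :=
    continuous_prod_of_discrete_left.2 fun i => continuous_sigmaMk (σ := fun _ : ι => Y) (i := i)

theorem compactSpace_sigma_iff {X : ι → Type*} [∀ i, TopologicalSpace (X i)]
    [∀ i, CompactSpace (X i)] [∀ i, Nonempty (X i)] : CompactSpace (Σ i, X i) ↔ Finite ι := by
  refine ⟨fun _ => ?_, fun _ => inferInstance⟩
  let _ : TopologicalSpace ι := ⊥
  have : DiscreteTopology ι := ⟨rfl⟩
  have : CompactSpace ι := Surjective.compactSpace (f := Sigma.fst (β := X))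
    (continuous_sigma fun _ => continuous_const) fun i => ⟨⟨i, Classical.arbitrary _⟩, rfl⟩
  exact finite_of_compact_of_discrete

end Sigma

namespace PiNat

variable {α : Type u}

theorem cylinder_subset_of_mem_of_le {x y z : ℕ → α} {m n : ℕ} (hx : z ∈ cylinder x m)
    (hy : z ∈ cylinder y n) (hmn : m ≤ n) : cylinder y n ⊆ cylinder x m := by
  rw [← mem_cylinder_iff_eq.1 hy, ← mem_cylinder_iff_eq.1 hx]
  exact cylinder_anti z hmn

variable [TopologicalSpace α]

def cylinderHomeomorph (x : ℕ → α) (n : ℕ) : cylinder x n ≃ₜ (ℕ → α) where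
  toFun y i := y.1 (i + n)
  invFun z :=
    ⟨fun i => if i < n then x i else z (i - n), mem_cylinder_iff.2 fun i hi => if_pos hi⟩
  left_inv y := by
    ext i
    by_cases hi : i < n
    · simp [hi, mem_cylinder_iff.1 y.2 i hi]
    · simp [hi, Nat.sub_add_cancel (not_lt.1 hi)]
  right_inv z := by
    ext i
    simp
  continuous_toFun := continuous_pi fun i => (continuous_apply _).comp continuous_subtype_val
  continuous_invFun := by
    refine Continuous.subtype_mk (continuous_pi fun i => ?_) _
    split_ifs
    · exact continuous_const
    · exact continuous_apply _

variable [DiscreteTopology α]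

theorem exists_cylinder_subset_of_isOpen {U : Set (ℕ → α)} (hU : IsOpen U) {x : ℕ → α}
    (hx : x ∈ U) : ∃ n, cylinder x n ⊆ U := by
  obtain ⟨_, ⟨y, n, rfl⟩, hxy, hyU⟩ :=
    (isTopologicalBasis_cylinders fun _ => α).exists_subset_of_mem_open hx hU
  exact ⟨n, mem_cylinder_iff_eq.1 hxy ▸ hyU⟩

theorem exists_pairwiseDisjoint_cylinders {U : Set (ℕ → α)} (hU : IsOpen U) :
    ∃ S : Set (Set (ℕ → α)), S.PairwiseDisjoint id ∧ ⋃₀ S = U ∧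
      ∀ P ∈ S, ∃ x n, P = cylinder x n := by
  classical
  have hex (x : U) := exists_cylinder_subset_of_isOpen hU x.2
  let N (x : U) := Nat.find (hex x)
  have hN (x : U) : cylinder x (N x) ⊆ U := Nat.find_spec (hex x)
  have hmeet (x y : U) (hle : N x ≤ N y) (z) (hzx : z ∈ cylinder x (N x))
      (hzy : z ∈ cylinder (y : ℕ → α) (N y)) :
      cylinder x (N x) = cylinder (y : ℕ → α) (N y) := by
    have hy : (y : ℕ → α) ∈ cylinder x (N x) :=
      cylinder_subset_of_mem_of_le hzx hzy hle (self_mem_cylinder (E := fun _ => α) y _)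
    have : N y ≤ N x := Nat.find_min' _ (mem_cylinder_iff_eq.1 hy ▸ hN x)
    rw [← mem_cylinder_iff_eq.1 hzx, ← mem_cylinder_iff_eq.1 hzy, le_antisymm hle this]
  refine ⟨range fun x : U => cylinder x (N x), ?_, ?_, ?_⟩
  · rintro _ ⟨x, rfl⟩ _ ⟨y, rfl⟩ hne
    refine Set.disjoint_left.2 fun z hzx hzy => hne ?_
    rcases le_total (N x) (N y) with h | h
    · exact hmeet x y h z hzx hzy
    · exact (hmeet y x h z hzy hzx).symm
  · refine (sUnion_subset ?_).antisymm fun x hx => ?_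
    · rintro _ ⟨x, rfl⟩; exact hN x
    · exact mem_sUnion.2 ⟨_, mem_range_self ⟨x, hx⟩, self_mem_cylinder _ _⟩
  · rintro _ ⟨x, rfl⟩; exact ⟨x, N x, rfl⟩

theorem exists_homeomorph_sigma_of_isOpen [Finite α] [Nonempty α] {U : Set (ℕ → α)}
    (hU : IsOpen U) : ∃ ι : Type u, Countable ι ∧ (IsCompact U ↔ Finite ι) ∧
      Nonempty (U ≃ₜ Σ _ : ι, (ℕ → α)) := by
  obtain ⟨S, hdisj, hunion, hcyl⟩ := exists_pairwiseDisjoint_cylinders hU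
  choose x n hxn using hcyl
  have hcount : S.Countable := hdisj.countable_of_isOpen
    (fun P hP => (hxn P hP ▸ isOpen_cylinder _ _ _ : IsOpen P))
    fun P hP => (hxn P hP ▸ ⟨_, self_mem_cylinder _ _⟩ : P.Nonempty)
  let e : U ≃ₜ Σ _ : S, (ℕ → α) :=
    (Homeomorph.setCongr (hunion ▸ sUnion_eq_iUnion)).trans <|
      (Set.iUnionHomeomorphSigmaOfDisjoint (fun P => hxn P P.2 ▸ isOpen_cylinder _ _ _)
        (hdisj.subtype _ _)).trans <| Homeomorph.sigmaCongrRight fun P =>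
          (Homeomorph.setCongr (hxn P P.2)).trans (cylinderHomeomorph _ _)
  refine ⟨S, hcount.to_subtype, ?_, ⟨e⟩⟩
  rw [isCompact_iff_compactSpace, ← compactSpace_sigma_iff (X := fun _ : S => ℕ → α)]
  exact ⟨fun _ => e.compactSpace, fun _ => e.symm.compactSpace⟩

theorem not_isCompact_compl_singleton [Nontrivial α] (p : ℕ → α) : ¬IsCompact {p}ᶜ := by
  intro h
  obtain ⟨n, hn⟩ := exists_cylinder_subset_of_isOpen (isClosed_compl_iff.1 h.isClosed) rfl
  obtain ⟨a, ha⟩ := exists_ne (p n)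
  exact ha (by simpa using congrFun (hn (update_mem_cylinder p n a)) n)

end PiNat

section SumSelf

def Homeomorph.prodBoolSumSelf (Y : Type*) [TopologicalSpace Y] : Y × Bool ≃ₜ Y ⊕ Y :=
  (Homeomorph.prodCongr (.refl Y)
    (Equiv.boolEquivPUnitSumPUnit : Bool ≃ Unit ⊕ Unit).toHomeomorphOfDiscrete).trans <|
    Homeomorph.prodSumDistrib.trans <| .sumCongr (.prodPUnit Y) (.prodPUnit Y)

def Homeomorph.natArrowProdSelf (X : Type*) [TopologicalSpace X] : (ℕ → X) × X ≃ₜ (ℕ → X) :=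
  (Homeomorph.prodCongr (.refl _) (Homeomorph.funUnique Unit X).symm).trans <|
    Homeomorph.sumArrowHomeomorphProdArrow.symm.trans <|
      Homeomorph.piCongrLeft (Y := fun _ => X) Equiv.natSumPUnitEquivNat

variable {X : Type*} [TopologicalSpace X]

def Homeomorph.finSuccProdOfSumSelf (h : X ⊕ X ≃ₜ X) : ∀ n : ℕ, Fin (n + 1) × X ≃ₜ X
  | 0 => Homeomorph.uniqueProd (Fin 1) X
  | n + 1 =>
    (Homeomorph.prodCongr finSumFinEquiv.symm.toHomeomorphOfDiscrete (.refl X)).trans <|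
      Homeomorph.sumProdDistrib.trans <|
        (Homeomorph.sumCongr (finSuccProdOfSumSelf h n) (Homeomorph.uniqueProd _ _)).trans h

theorem nonempty_sigma_homeomorph_of_sumSelf (h : X ⊕ X ≃ₜ X) (ι : Type*) [Finite ι]
    [Nonempty ι] : Nonempty ((Σ _ : ι, X) ≃ₜ X) := by
  obtain ⟨n, ⟨e⟩⟩ := Finite.exists_equiv_fin ι
  obtain ⟨m, rfl⟩ : ∃ m, n = m + 1 :=
    Nat.exists_eq_succ_of_ne_zero fun hn => (hn ▸ e (Classical.arbitrary ι)).elim0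
  exact ⟨(Homeomorph.sigmaConstCongrLeft e X).trans <|
    (Homeomorph.sigmaEquivProd _ X).trans (Homeomorph.finSuccProdOfSumSelf h m)⟩

end SumSelf

def cantorSumSelfHomeomorph : (ℕ → Bool) ⊕ (ℕ → Bool) ≃ₜ (ℕ → Bool) :=
  (Homeomorph.prodBoolSumSelf _).symm.trans (Homeomorph.natArrowProdSelf Bool)

/-- A nonempty open subset of the Cantor set is homeomorphic to the Cantor set if compact,
and to the Cantor set minus a point if not compact. -/
theorem open_subset_cantor_classification (U : Set (ℕ → Bool)) (hU : IsOpen U)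
    (hne : U.Nonempty) :
    (IsCompact U → Nonempty (↥U ≃ₜ (ℕ → Bool))) ∧
    (¬ IsCompact U → ∀ p : ℕ → Bool, Nonempty (↥U ≃ₜ ↥({p}ᶜ : Set (ℕ → Bool)))) := by
  obtain ⟨ι, _, hι, ⟨e⟩⟩ := PiNat.exists_homeomorph_sigma_of_isOpen hU
  refine ⟨fun hc => ?_, fun hnc p => ?_⟩
  · have := hι.1 hc
    have : Nonempty ι := ⟨(e ⟨_, hne.some_mem⟩).1⟩
    obtain ⟨f⟩ := nonempty_sigma_homeomorph_of_sumSelf cantorSumSelfHomeomorph ι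
    exact ⟨e.trans f⟩
  · obtain ⟨κ, _, hκ, ⟨e'⟩⟩ :=
      PiNat.exists_homeomorph_sigma_of_isOpen (isOpen_compl_singleton (x := p))
    have : Infinite ι := not_finite_iff_infinite.1 (hι.not.1 hnc)
    have : Infinite κ :=
      not_finite_iff_infinite.1 (hκ.not.1 (PiNat.not_isCompact_compl_singleton p))
    obtain ⟨g⟩ := nonempty_equiv_of_countable (α := ι) (β := κ)
    exact ⟨e.trans <| (Homeomorph.sigmaConstCongrLeft g _).trans e'.symm⟩
end

section
/- For countable ordinals α and β, the ordinal spaces ω^α + 1 and ω^β + 1 (with their order topologies) are homeomorphic if and only if α = β. -/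
/-!
The Cantor–Bendixson derivatives `Xᵈ[γ]` are topological invariants. For the ordinal space
`[0, ω^β]` the `γ`-th derivative consists of nonzero multiples of `ω^γ` and contains `ω^β` for
every `γ ≤ β`, so `β` is the largest `γ` for which it is nonempty.
-/

open Ordinal Set Filter Topology Order CantorBendixson

universe u

namespace Topology.IsOpenEmbedding

variable {X Y : Type u} [TopologicalSpace X] [TopologicalSpace Y] {e : X → Y}

theorem image_relDerivedSet (he : IsOpenEmbedding e) (s : Set X) :
    e '' relDerivedSet s = relDerivedSet (e '' s) := by
  have accPt_iff (x : X) : AccPt (e x) (𝓟 (e '' s)) ↔ AccPt x (𝓟 s) := by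
    rw [← he.accPt_comap_iff, comap_principal, he.injective.preimage_image]
  ext y
  constructor
  · rintro ⟨x, ⟨hacc, hx⟩, rfl⟩
    exact ⟨(accPt_iff x).2 hacc, mem_image_of_mem e hx⟩
  · rintro ⟨hacc, x, hx, rfl⟩
    exact ⟨x, ⟨(accPt_iff x).1 hacc, hx⟩, rfl⟩

theorem image_iteratedDerivedSet (he : IsOpenEmbedding e) (s : Set X) (γ : Ordinal) :
    e '' sᵈ[γ] = (e '' s)ᵈ[γ] := by
  induction γ using Ordinal.limitRecOn with
  | zero => simp only [iteratedDerivedSet_zero]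
  | add_one γ ih =>
    rw [iteratedDerivedSet_succ, iteratedDerivedSet_succ, he.image_relDerivedSet, ih]
  | limit o ho ih =>
    have : Nonempty (Iio o) := ⟨⟨0, ho.bot_lt⟩⟩
    rw [iteratedDerivedSet_limit ho, iteratedDerivedSet_limit ho,
      he.injective.injOn.image_iInter_eq]
    exact iInter_congr fun δ => ih δ δ.2

end Topology.IsOpenEmbedding

theorem Homeomorph.image_iteratedDerivedSet_univ {X Y : Type u} [TopologicalSpace X]
    [TopologicalSpace Y] (f : X ≃ₜ Y) (γ : Ordinal) :
    f '' (univ : Set X)ᵈ[γ] = (univ : Set Y)ᵈ[γ] := by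
  rw [f.isOpenEmbedding.image_iteratedDerivedSet, image_univ_of_surjective f.surjective]

/-! A space in `Type (u + 1)`, such as `Ordinal.{u}`, has its derivatives indexed by
`Ordinal.{u + 1}`; its `γ`-th derivative for `γ : Ordinal.{u}` is the one at `lift γ`. -/

namespace CantorBendixson

variable {X : Type (u + 1)} [TopologicalSpace X]

theorem iteratedDerivedSet_lift_add_one (s : Set X) (γ : Ordinal.{u}) :
    sᵈ[lift.{u + 1} (γ + 1)] = relDerivedSet sᵈ[lift.{u + 1} γ] := by
  rw [lift_add, lift_one, iteratedDerivedSet_succ]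

theorem mem_iteratedDerivedSet_lift_iff_of_isSuccLimit {s : Set X} {o : Ordinal.{u}} {x : X}
    (ho : IsSuccLimit o) : x ∈ sᵈ[lift.{u + 1} o] ↔ ∀ δ < o, x ∈ sᵈ[lift.{u + 1} δ] := by
  rw [iteratedDerivedSet_limit (isSuccLimit_lift.2 ho), mem_iInter]
  constructor
  · exact fun h δ hδ => h ⟨_, lift_lt.2 hδ⟩
  · rintro h ⟨b, hb⟩
    obtain ⟨δ, rfl⟩ := mem_range_lift_of_le hb.le
    exact h δ (lift_lt.1 hb)

end CantorBendixson

namespace Ordinal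

theorem isOpen_Iic (a : Ordinal) : IsOpen (Iic a) := by
  rw [← Order.Iio_succ]
  exact isOpen_Iio

theorem accPt_setOf_dvd_iff {c x : Ordinal} (hc : c ≠ 0) :
    AccPt x (𝓟 {y | c ∣ y}) ↔ x ≠ 0 ∧ c * ω ∣ x := by
  have hc0 : 0 < c := pos_iff_ne_zero.2 hc
  rw [SuccOrder.accPt_principal, isMin_iff_eq_bot, bot_eq_zero]
  constructor
  · rintro ⟨hx, hacc⟩
    -- no multiple of `c` lies strictly between `c * m` and `c * (m + 1)`
    have gap (m : Ordinal) (hm : c * m < x) : c * (m + 1) < x := by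
      by_contra! hle
      obtain ⟨_, ⟨k, rfl⟩, hmk, hkx⟩ := hacc _ hm
      have hkm : k ≤ m := Order.lt_add_one_iff.1 <|
        (mul_lt_mul_iff_right₀ hc0).1 (hkx.trans_le hle)
      exact hkm.not_gt ((mul_lt_mul_iff_right₀ hc0).1 hmk)
    have hxt : c * (x / c) = x := by
      refine (mul_div_le x c).eq_or_lt.resolve_right fun hlt => ?_
      exact (gap _ hlt).not_ge (mul_add_one c (x / c) ▸ (lt_mul_div_add x hc).le)
    have hlim : IsSuccPrelimit (x / c) := fun m hm => by
      have hx' := gap m (hxt ▸ (mul_lt_mul_iff_right₀ hc0).2 hm.lt)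
      rw [← succ_eq_add_one, hm.succ_eq, hxt] at hx'
      exact hx'.false
    obtain ⟨t, ht⟩ := isSuccPrelimit_iff_omega0_dvd.1 hlim
    exact ⟨hx, t, by rw [← hxt, ht, mul_assoc]⟩
  · rintro ⟨hx, t, rfl⟩
    refine ⟨hx, fun b hb => ⟨c * (b / c + 1), ⟨_, rfl⟩, ?_, ?_⟩⟩
    · exact mul_add_one c (b / c) ▸ lt_mul_div_add b hc
    · rw [mul_assoc, mul_lt_mul_iff_right₀ hc0]
      refine (isSuccPrelimit_iff_omega0_dvd.2 (dvd_mul_right ω t)).succ_lt ?_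
      rwa [← lt_mul_iff_div_lt hc, ← mul_assoc]

theorem opow_dvd_of_isSuccLimit {x o : Ordinal} (ho : IsSuccLimit o)
    (h : ∀ δ < o, ω ^ δ ∣ x) : ω ^ o ∣ x := by
  rw [dvd_iff_mod_eq_zero]
  by_contra hne
  obtain ⟨δ, hδo, hlt⟩ := (lt_opow_of_isSuccLimit omega0_ne_zero ho).1
    (mod_lt x (opow_ne_zero o omega0_ne_zero))
  have hdvd : ω ^ δ ∣ x % ω ^ o := by
    rw [dvd_iff_mod_eq_zero, mod_mod_of_dvd x (opow_dvd_opow ω hδo.le),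
      ← dvd_iff_mod_eq_zero]
    exact h δ hδo
  exact (le_of_dvd hne hdvd).not_gt hlt

theorem iteratedDerivedSet_subset_setOf_opow_dvd (s : Set Ordinal.{u}) (γ : Ordinal.{u}) :
    sᵈ[lift.{u + 1} γ] ⊆ {x | ω ^ γ ∣ x} := by
  induction γ using limitRecOn with
  | zero => simp
  | add_one γ ih =>
    intro x hx
    rw [iteratedDerivedSet_lift_add_one, relDerivedSet_apply] at hx
    change ω ^ (γ + 1) ∣ x
    rw [opow_add_one]
    exact ((accPt_setOf_dvd_iff (opow_ne_zero γ omega0_ne_zero)).1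
      (derivedSet_mono _ _ ih hx.1)).2
  | limit o ho ih =>
    intro x hx
    rw [mem_iteratedDerivedSet_lift_iff_of_isSuccLimit ho] at hx
    exact opow_dvd_of_isSuccLimit ho fun δ hδ => ih δ hδ (hx δ hδ)

theorem ne_zero_of_mem_iteratedDerivedSet {s : Set Ordinal.{u}} {γ : Ordinal.{u + 1}}
    {x : Ordinal.{u}} (hγ : γ ≠ 0) (hx : x ∈ sᵈ[γ]) : x ≠ 0 := by
  have hx1 : x ∈ sᵈ[0 + 1] :=
    iteratedDerivedSet_antitone s (by rwa [zero_add, one_le_iff_ne_zero]) hx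
  rw [iteratedDerivedSet_succ, iteratedDerivedSet_zero] at hx1
  rintro rfl
  exact hx1.1.not_isMin isMin_bot

theorem opow_le_of_mem_iteratedDerivedSet {s : Set Ordinal.{u}} {γ x : Ordinal.{u}}
    (hγ : γ ≠ 0) (hx : x ∈ sᵈ[lift.{u + 1} γ]) : ω ^ γ ≤ x :=
  le_of_dvd
    (ne_zero_of_mem_iteratedDerivedSet (by rwa [Ne, ← lift_zero.{u, u + 1}, lift_inj]) hx)
    (iteratedDerivedSet_subset_setOf_opow_dvd s γ hx)

theorem mem_iteratedDerivedSet_Iic {a γ x : Ordinal.{u}} (hx0 : x ≠ 0) (hxa : x ≤ a)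
    (hdvd : ω ^ γ ∣ x) : x ∈ (Iic a)ᵈ[lift.{u + 1} γ] := by
  induction γ using limitRecOn generalizing x with
  | zero => rwa [lift_zero, iteratedDerivedSet_zero]
  | add_one γ ih =>
    rw [iteratedDerivedSet_lift_add_one,
      (isClosed_iteratedDerivedSet isClosed_Iic _).relDerivedSet_eq, mem_derivedSet,
      SuccOrder.accPt_principal]
    rw [opow_add_one] at hdvd
    obtain ⟨hmin, hacc⟩ := SuccOrder.accPt_principal.1
      ((accPt_setOf_dvd_iff (opow_ne_zero γ omega0_ne_zero)).2 ⟨hx0, hdvd⟩)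
    refine ⟨hmin, fun b hb => ?_⟩
    obtain ⟨y, hy, hby, hyx⟩ := hacc b hb
    exact ⟨y, ih (pos_of_gt hby).ne' (hyx.le.trans hxa) hy, hby, hyx⟩
  | limit o ho ih =>
    rw [mem_iteratedDerivedSet_lift_iff_of_isSuccLimit ho]
    exact fun δ hδ => ih δ hδ hx0 hxa ((opow_dvd_opow ω hδ.le).trans hdvd)

theorem iteratedDerivedSet_Iic_opow_nonempty_iff {β γ : Ordinal.{u}} :
    ((Iic (ω ^ β))ᵈ[lift.{u + 1} γ]).Nonempty ↔ γ ≤ β := by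
  constructor
  · rintro ⟨x, hx⟩
    rcases eq_or_ne γ 0 with rfl | hγ
    · exact zero_le
    have hxβ : x ≤ ω ^ β := by simpa using iteratedDerivedSet_antitone _ zero_le hx
    exact (opow_le_opow_iff_right one_lt_omega0).1
      ((opow_le_of_mem_iteratedDerivedSet hγ hx).trans hxβ)
  · intro h
    exact ⟨_, mem_iteratedDerivedSet_Iic (opow_ne_zero β omega0_ne_zero) le_rfl
      (opow_dvd_opow ω h)⟩

theorem iteratedDerivedSet_univ_Iic_opow_nonempty_iff {β γ : Ordinal.{u}} :
    ((Set.univ : Set (Iic (ω ^ β)))ᵈ[lift.{u + 1} γ]).Nonempty ↔ γ ≤ β := by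
  rw [← image_nonempty (f := Subtype.val),
    (isOpen_Iic _).isOpenEmbedding_subtypeVal.image_iteratedDerivedSet, image_univ,
    Subtype.range_coe]
  exact iteratedDerivedSet_Iic_opow_nonempty_iff

end Ordinal

theorem omega_pow_succ_homeo_iff_general (α β : Ordinal) :
    Nonempty (↥(Set.Iic (omega0 ^ α)) ≃ₜ ↥(Set.Iic (omega0 ^ β))) ↔ α = β := by
  constructor
  · rintro ⟨f⟩
    refine eq_of_forall_le_iff fun γ => ?_
    rw [← iteratedDerivedSet_univ_Iic_opow_nonempty_iff,
      ← iteratedDerivedSet_univ_Iic_opow_nonempty_iff, ← f.image_iteratedDerivedSet_univ,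
      image_nonempty]
  · rintro rfl
    exact ⟨.refl _⟩

/-- For countable ordinals `α`, `β`, the ordinal spaces `ω^α + 1` and `ω^β + 1` (the sets of
ordinals `≤ ω^α`, `≤ ω^β`, with the order topology) are homeomorphic iff `α = β`. -/
theorem omega_pow_succ_homeo_iff (α β : Ordinal) (hα : α.card ≤ Cardinal.aleph0)
    (hβ : β.card ≤ Cardinal.aleph0) :
    Nonempty (↥(Set.Iic (omega0 ^ α)) ≃ₜ ↥(Set.Iic (omega0 ^ β))) ↔ α = β :=
  omega_pow_succ_homeo_iff_general α β
end

section
/- (Guessing geodesics criterion) Let X be a connected graph with its combinatorial metric. Suppose that to every pair of vertices x, y there is assigned a connected subgraph A(x,y) containing x and y, and there exists M > 0 such that: (1) whenever d(x,y) ≤ 1, the subgraph A(x,y) has diameter at most M; and (2) for all vertices x, y, z, the subgraph A(x,y) is contained in the M-neighbourhood of A(x,z) ∪ A(y,z). Then X is δ-hyperbolic for some δ depending only on M. -/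
/-!
Bisection shows that `A a b` lies within `M (n + 1)` of every walk of length at most `2 ^ n`
from `a` to `b`, a bound growing like `M log₂` of the length. Induction on the length of a
geodesic `γ` from `x` to `y` improves it to the uniform bound `Δ = 2 ^ (8 (M + 1))`: if
`u ∈ A x y` were at distance `r > Δ` from `γ`, cut `γ` at the points `a`, `b` about `r + 2M + Δ`
before and after a point of `γ` nearest to `u`. Thinness applied twice puts a point `2M`-close
to `u` into `A x a`, `A b y` or `A a b`; the first two contradict the induction hypothesis on the
shorter geodesics `[x, a]`, `[b, y]`, the last contradicts bisection along `[a, b]`, whose length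
is `O(r)`. Since `A x y` is connected and contains `x` and `y`, conversely `γ` lies within
`3Δ + 1` of `A x y`. Hence geodesic triangles are uniformly slim, and slim triangles give the
four-point condition.
-/

namespace Nat

lemma mul_log_add_seven_lt {M r : ℕ} (hr : 2 ^ (8 * (M + 1)) < r) :
    M * (log 2 r + 7) < r := by
  set m := log 2 r
  have hm : 8 * (M + 1) ≤ m := le_log_of_pow_le one_lt_two hr.le
  have hmr : 2 ^ m ≤ r := pow_log_le_self 2 (ne_zero_of_lt hr)
  obtain ⟨k, hk⟩ := even_or_odd' m
  have hk2 : 2 * k ^ 2 + 1 ≤ 2 ^ m :=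
    (two_mul_sq_add_one_le_two_pow_two_mul k).trans (Nat.pow_le_pow_right two_pos (by omega))
  rcases hk with hk | hk <;> rw [hk] at hm ⊢ <;> nlinarith

end Nat

namespace SimpleGraph

variable {V : Type*} {G : SimpleGraph V}

namespace Walk

variable {x y : V}

lemma exists_isSubwalk_getVert_getVert (γ : G.Walk x y) {i k : ℕ} (hik : i ≤ k)
    (hk : k ≤ γ.length) :
    ∃ q : G.Walk (γ.getVert i) (γ.getVert k), q.length = k - i ∧ q.IsSubwalk γ := by
  have hend : (γ.drop i).getVert (k - i) = γ.getVert k := by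
    rw [drop_getVert, Nat.add_sub_cancel' hik]
  refine ⟨((γ.drop i).take (k - i)).copy rfl hend, by simp; omega, ?_⟩
  simpa using ((isSubwalk_take _ _).trans (isSubwalk_drop γ i)).copy rfl hend rfl rfl

lemma dist_getVert_getVert (γ : G.Walk x y) (hγ : γ.length = G.dist x y) {i k : ℕ}
    (hi : i ≤ γ.length) (hk : k ≤ γ.length) :
    G.dist (γ.getVert i) (γ.getVert k) = max (k - i) (i - k) := by
  rcases le_total i k with hik | hki
  · obtain ⟨q, hq, hsub⟩ := γ.exists_isSubwalk_getVert_getVert hik hk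
    rw [← length_eq_dist_of_subwalk hγ hsub, hq]
    omega
  · obtain ⟨q, hq, hsub⟩ := γ.exists_isSubwalk_getVert_getVert hki hi
    rw [dist_comm, ← length_eq_dist_of_subwalk hγ hsub, hq]
    omega

lemma dist_start_getVert (γ : G.Walk x y) (hγ : γ.length = G.dist x y) {k : ℕ}
    (hk : k ≤ γ.length) : G.dist x (γ.getVert k) = k := by
  simpa using γ.dist_getVert_getVert hγ (Nat.zero_le _) hk

lemma dist_getVert_end (γ : G.Walk x y) (hγ : γ.length = G.dist x y) {i : ℕ}
    (hi : i ≤ γ.length) : G.dist (γ.getVert i) y = γ.length - i := by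
  have h := γ.dist_getVert_getVert hγ hi le_rfl
  rw [getVert_length] at h
  omega

lemma dist_add_dist_of_mem_support (γ : G.Walk x y) (hγ : γ.length = G.dist x y) {p : V}
    (hp : p ∈ γ.support) : G.dist x p + G.dist p y = G.dist x y := by
  obtain ⟨i, rfl, hi⟩ := mem_support_iff_exists_getVert.mp hp
  rw [γ.dist_start_getVert hγ hi, γ.dist_getVert_end hγ hi]
  omega

lemma exists_mem_support_le_and_le {W : Type*} {H : SimpleGraph W} (f : W → ℕ) (c : ℕ)
    (hf : ∀ u v, H.Adj u v → f v ≤ f u + c) {s t : W} (p : H.Walk s t) {j : ℕ}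
    (hs : f s ≤ j) (ht : j ≤ f t) : ∃ u ∈ p.support, j ≤ f u ∧ f u ≤ j + c := by
  induction p with
  | nil => exact ⟨_, start_mem_support _, ht, by omega⟩
  | @cons s v t hadj p ih =>
    by_cases hv : f v ≤ j
    · obtain ⟨u, hu, hju⟩ := ih hv ht
      exact ⟨u, List.mem_cons_of_mem _ hu, hju⟩
    · exact ⟨v, by simp, by omega, by have := hf s v hadj; omega⟩

end Walk

lemma Connected.exists_mem_dist_le_of_induce_preconnected (hconn : G.Connected) {x y : V}
    (γ : G.Walk x y) (hγ : γ.length = G.dist x y) {S : Set V} (hS : (G.induce S).Preconnected)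
    (hx : x ∈ S) (hy : y ∈ S) {Δ : ℕ} (hnear : ∀ u ∈ S, ∃ w ∈ γ.support, G.dist u w ≤ Δ) :
    ∀ w ∈ γ.support, ∃ u ∈ S, G.dist w u ≤ 3 * Δ + 1 := by
  have hidx : ∀ u : S, ∃ i, i ≤ γ.length ∧ G.dist u (γ.getVert i) ≤ Δ := by
    intro u
    obtain ⟨w, hw, huw⟩ := hnear u u.2
    obtain ⟨i, rfl, hi⟩ := Walk.mem_support_iff_exists_getVert.mp hw
    exact ⟨i, hi, huw⟩
  -- `F` moves by at most `2Δ + 1` along edges of `S`, so along a walk in `S` from `x` to `y`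
  -- it comes close to every index of `γ`
  choose F hFL hF using hidx
  have hdist : ∀ u : S, ∀ i ≤ γ.length,
      G.dist (γ.getVert i) u ≤ max (F u - i) (i - F u) + Δ := by
    intro u i hi
    have := hconn.dist_triangle (u := γ.getVert i) (v := γ.getVert (F u)) (w := u)
    rw [γ.dist_getVert_getVert hγ hi (hFL u), dist_comm (u := γ.getVert (F u))] at this
    have := hF u
    omega
  have hstep : ∀ u v : S, (G.induce S).Adj u v → F v ≤ F u + (2 * Δ + 1) := by
    intro u v huv
    have h₁ := γ.dist_getVert_getVert hγ (hFL u) (hFL v)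
    have h₂ := hconn.dist_triangle (u := γ.getVert (F u)) (v := u) (w := γ.getVert (F v))
    have h₃ := hconn.dist_triangle (u := (u : V)) (v := v) (w := γ.getVert (F v))
    rw [dist_comm (u := γ.getVert (F u)) (v := u)] at h₂
    have := dist_eq_one_iff_adj.mpr (induce_adj.mp huv)
    have := hF u
    have := hF v
    omega
  intro w hw
  obtain ⟨j, rfl, hj⟩ := Walk.mem_support_iff_exists_getVert.mp hw
  suffices ∃ u : S, j ≤ F u + (2 * Δ + 1) ∧ F u ≤ j + (2 * Δ + 1) by
    obtain ⟨u, h₁, h₂⟩ := this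
    exact ⟨u, u.2, by have := hdist u j hj; omega⟩
  have hFx : F ⟨x, hx⟩ ≤ Δ := by
    simpa [γ.dist_start_getVert hγ (hFL _)] using hF ⟨x, hx⟩
  have hFy : γ.length ≤ F ⟨y, hy⟩ + Δ := by
    have := hF ⟨y, hy⟩
    rw [dist_comm, γ.dist_getVert_end hγ (hFL _)] at this
    omega
  by_cases hjx : j ≤ F ⟨x, hx⟩
  · exact ⟨⟨x, hx⟩, by omega, by omega⟩
  by_cases hjy : F ⟨y, hy⟩ ≤ j
  · exact ⟨⟨y, hy⟩, by omega, by omega⟩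
  obtain ⟨p⟩ := hS ⟨x, hx⟩ ⟨y, hy⟩
  obtain ⟨u, -, h₁, h₂⟩ :=
    p.exists_mem_support_le_and_le F _ hstep (j := j) (by omega) (by omega)
  exact ⟨u, by omega, h₂⟩

def SlimTriangles (G : SimpleGraph V) (δ : ℕ) : Prop :=
  ∀ ⦃x y z : V⦄ (p : G.Walk x y) (q : G.Walk x z) (r : G.Walk y z),
    p.length = G.dist x y → q.length = G.dist x z → r.length = G.dist y z →
    ∀ u ∈ p.support, ∃ v, (v ∈ q.support ∨ v ∈ r.support) ∧ G.dist u v ≤ δ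

namespace Connected

lemma dist_add_dist_le_of_mem_support (hconn : G.Connected) {a b q : V} (γ : G.Walk a b)
    (hγ : γ.length = G.dist a b) (hq : q ∈ γ.support) (p : V) :
    G.dist a p + G.dist p b ≤ G.dist a b + 2 * G.dist p q := by
  have hsplit := γ.dist_add_dist_of_mem_support hγ hq
  have h₁ : G.dist a p ≤ G.dist a q + G.dist q p := hconn.dist_triangle
  have h₂ : G.dist p b ≤ G.dist p q + G.dist q b := hconn.dist_triangle
  rw [dist_comm (u := q)] at h₁
  omega

lemma exists_mem_support_two_mul_dist_le (hconn : G.Connected) {δ : ℕ}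
    (hslim : G.SlimTriangles δ) (w : V) {y z : V} (γ : G.Walk y z) (hγ : γ.length = G.dist y z) :
    ∃ p ∈ γ.support, 2 * G.dist w p + G.dist y z ≤ G.dist w y + G.dist w z + (4 * δ + 1) := by
  obtain ⟨γyw, hγyw⟩ := hconn.exists_walk_length_eq_dist y w
  obtain ⟨γzw, hγzw⟩ := hconn.exists_walk_length_eq_dist z w
  have hyw : G.dist y w ≤ G.dist y z + G.dist z w := hconn.dist_triangle
  have hzw : G.dist z w ≤ G.dist z y + G.dist y w := hconn.dist_triangle
  rw [dist_comm (u := z) (v := y)] at hzw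
  -- `t` is the Gromov product `(z | w)_y`, rounded down
  set t := (G.dist y z + G.dist y w - G.dist z w) / 2
  have ht : t ≤ γ.length := by omega
  refine ⟨γ.getVert t, γ.getVert_mem_support t, ?_⟩
  have hyp := γ.dist_start_getVert hγ ht
  have hpz := γ.dist_getVert_end hγ ht
  obtain ⟨q, hq | hq, hpq⟩ := hslim γ γyw γzw hγ hγyw hγzw _ (γ.getVert_mem_support t)
  · have := hconn.dist_add_dist_le_of_mem_support γyw hγyw hq (γ.getVert t)
    rw [dist_comm (u := w), dist_comm (u := w) (v := y), dist_comm (u := w) (v := z)]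
    omega
  · have := hconn.dist_add_dist_le_of_mem_support γzw hγzw hq (γ.getVert t)
    rw [dist_comm (u := z) (v := γ.getVert t)] at this
    rw [dist_comm (u := w), dist_comm (u := w) (v := y), dist_comm (u := w) (v := z)]
    omega

theorem dist_add_dist_le_max_add_of_slimTriangles (hconn : G.Connected) {δ : ℕ}
    (hslim : G.SlimTriangles δ) (x y z w : V) :
    G.dist x y + G.dist z w ≤
      max (G.dist x z + G.dist y w) (G.dist x w + G.dist y z) + (6 * δ + 1) := by
  obtain ⟨γxy, hγxy⟩ := hconn.exists_walk_length_eq_dist x y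
  obtain ⟨γxz, hγxz⟩ := hconn.exists_walk_length_eq_dist x z
  obtain ⟨γyz, hγyz⟩ := hconn.exists_walk_length_eq_dist y z
  obtain ⟨p, hp, hwp⟩ := hconn.exists_mem_support_two_mul_dist_le hslim w γxy hγxy
  obtain ⟨q, hq | hq, hpq⟩ := hslim γxy γxz γyz hγxy hγxz hγyz p hp
  all_goals
    have hwq : G.dist w q ≤ G.dist w p + G.dist p q := hconn.dist_triangle
    rw [dist_comm (u := z) (v := w), dist_comm (u := y) (v := w), dist_comm (u := x) (v := w)]
  · have := hconn.dist_add_dist_le_of_mem_support γxz hγxz hq w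
    rw [dist_comm (u := x) (v := w)] at this
    omega
  · have := hconn.dist_add_dist_le_of_mem_support γyz hγyz hq w
    rw [dist_comm (u := y) (v := w)] at this
    omega

end Connected

structure IsGuessingFamily (G : SimpleGraph V) (M : ℕ) (A : V → V → Set V) : Prop where
  mem : ∀ x y, x ∈ A x y ∧ y ∈ A x y
  dist_le_of_dist_le_one : ∀ x y, G.dist x y ≤ 1 → ∀ u ∈ A x y, ∀ v ∈ A x y, G.dist u v ≤ M
  exists_dist_le : ∀ x y z, ∀ u ∈ A x y, ∃ v ∈ A x z ∪ A y z, G.dist u v ≤ M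

namespace IsGuessingFamily

variable {M : ℕ} {A : V → V → Set V}

lemma exists_mem_support_dist_le_of_length_le_two_pow (hconn : G.Connected)
    (hA : IsGuessingFamily G M A) (n : ℕ) :
    ∀ {a b : V} (p : G.Walk a b), p.length ≤ 2 ^ n →
      ∀ u ∈ A a b, ∃ v ∈ p.support, G.dist u v ≤ M * (n + 1) := by
  induction n with
  | zero =>
    intro a b p hp u hu
    have hab : G.dist a b ≤ 1 := (dist_le p).trans (by simpa using hp)
    exact ⟨a, p.start_mem_support,
      by simpa using hA.dist_le_of_dist_le_one a b hab u hu a (hA.mem a b).1⟩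
  | succ n ih =>
    intro a b p hp u hu
    have hM : M * (n + 1 + 1) = M + M * (n + 1) := by ring
    obtain ⟨v, hv | hv, huv⟩ := hA.exists_dist_le a b (p.getVert (2 ^ n)) u hu
    · obtain ⟨c, hc, hvc⟩ := ih (p.take (2 ^ n)) (by simp) v hv
      have := hconn.dist_triangle (u := u) (v := v) (w := c)
      exact ⟨c, (Walk.isSubwalk_take p _).support_subset hc, by omega⟩
    · have hlen : (p.drop (2 ^ n)).reverse.length ≤ 2 ^ n := by
        rw [Walk.length_reverse, Walk.drop_length]
        rw [pow_succ] at hp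
        omega
      obtain ⟨c, hc, hvc⟩ := ih (p.drop (2 ^ n)).reverse hlen v hv
      rw [Walk.support_reverse, List.mem_reverse] at hc
      have := hconn.dist_triangle (u := u) (v := v) (w := c)
      exact ⟨c, (Walk.isSubwalk_drop p _).support_subset hc, by omega⟩

lemma two_mul_lt_dist_of_mem_far_end (hconn : G.Connected) (hA : IsGuessingFamily G M A)
    {Δ : ℕ} {x y : V} (γ : G.Walk x y) (hγ : γ.length = G.dist x y)
    (IH : ∀ ⦃a b : V⦄ (β : G.Walk a b), β.length = G.dist a b → β.length < γ.length →
      ∀ u ∈ A a b, ∃ w ∈ β.support, G.dist u w ≤ Δ)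
    {u : V} {r j : ℕ} (hnear : ∀ w ∈ γ.support, r ≤ G.dist u w) (hj : j ≤ γ.length)
    (hjr : G.dist u (γ.getVert j) ≤ r) (hMr : 3 * M < r) {v : V}
    (hv : v ∈ A x (γ.getVert (j - (r + 2 * M + Δ + 1)))) :
    2 * M < G.dist u v := by
  by_contra! huv
  rcases lt_or_ge j (r + 2 * M + Δ + 1) with hjD | hjD
  · rw [Nat.sub_eq_zero_of_le hjD.le, Walk.getVert_zero] at hv
    have hvx := hA.dist_le_of_dist_le_one x x (by simp) v hv x (hA.mem x x).1
    have := hnear x γ.start_mem_support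
    have := hconn.dist_triangle (u := u) (v := v) (w := x)
    omega
  · set k := j - (r + 2 * M + Δ + 1)
    have hk : k < γ.length := by omega
    obtain ⟨c, hc, hvc⟩ := IH (γ.take k) (length_eq_dist_of_subwalk hγ (γ.isSubwalk_take k))
      (by simp; omega) v hv
    obtain ⟨i, rfl, hi⟩ := Walk.mem_support_iff_exists_getVert.mp hc
    rw [Walk.take_getVert] at hvc
    have hcj := γ.dist_getVert_getVert hγ (i := min k i) (by omega) hj
    have h₁ := hconn.dist_triangle (u := γ.getVert (min k i)) (v := v) (w := γ.getVert j)
    have h₂ := hconn.dist_triangle (u := v) (v := u) (w := γ.getVert j)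
    rw [dist_comm (u := γ.getVert (min k i)) (v := v)] at h₁
    rw [dist_comm (u := v) (v := u)] at h₂
    omega

theorem exists_mem_support_dist_le (hconn : G.Connected) (hA : IsGuessingFamily G M A)
    {Δ : ℕ} (hΔ : ∀ r, Δ < r → M * (Nat.log 2 r + 7) < r) {x y : V} (γ : G.Walk x y)
    (hγ : γ.length = G.dist x y) : ∀ u ∈ A x y, ∃ w ∈ γ.support, G.dist u w ≤ Δ := by
  induction hL : γ.length using Nat.strong_induction_on generalizing x y with
  | _ L IH =>
  subst hL
  replace IH : ∀ ⦃a b : V⦄ (β : G.Walk a b), β.length = G.dist a b → β.length < γ.length →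
      ∀ u ∈ A a b, ∃ w ∈ β.support, G.dist u w ≤ Δ :=
    fun a b β hβ hlt => IH _ hlt β hβ rfl
  intro u hu
  by_contra! hfar
  classical
  -- `γ.getVert j` is a point of `γ` nearest to `u`
  obtain ⟨w₀, hw₀, hmin⟩ := γ.support.toFinset.exists_min_image (G.dist u) ⟨x, by simp⟩
  simp only [List.mem_toFinset] at hw₀ hmin
  obtain ⟨j, rfl, hj⟩ := Walk.mem_support_iff_exists_getVert.mp hw₀
  set r := G.dist u (γ.getVert j)
  have hΔr : Δ < r := hfar _ hw₀
  have hlog := hΔ r hΔr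
  have h7M : M * 7 ≤ M * (Nat.log 2 r + 7) := Nat.mul_le_mul_left M (by omega)
  set D := r + 2 * M + Δ + 1
  obtain ⟨v₁, hv₁ | hv₁, huv₁⟩ := hA.exists_dist_le x y (γ.getVert (j - D)) u hu
  · have := hA.two_mul_lt_dist_of_mem_far_end hconn γ hγ IH hmin hj le_rfl (by omega) hv₁
    omega
  obtain ⟨v₂, hv₂ | hv₂, hv₁₂⟩ :=
    hA.exists_dist_le y (γ.getVert (j - D)) (γ.reverse.getVert (γ.length - j - D)) v₁ hv₁
  all_goals have huv₂ := hconn.dist_triangle (u := u) (v := v₁) (w := v₂)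
  · have := hA.two_mul_lt_dist_of_mem_far_end hconn γ.reverse (by simp [hγ, dist_comm])
      (by simpa using IH) (by simpa using hmin) (j := γ.length - j) (by simp)
      (by rw [Walk.getVert_reverse, Nat.sub_sub_self hj]) (by omega) hv₂
    omega
  · rw [Walk.getVert_reverse] at hv₂
    obtain ⟨q, hq, hsub⟩ := γ.exists_isSubwalk_getVert_getVert
      (i := j - D) (k := γ.length - (γ.length - j - D)) (by omega) (by omega)
    have hr := Nat.lt_pow_succ_log_self one_lt_two r
    obtain ⟨c, hc, hv₂c⟩ := hA.exists_mem_support_dist_le_of_length_le_two_pow hconn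
      (Nat.log 2 r + 4) q (by rw [hq, pow_add]; rw [pow_succ] at hr; omega) v₂ hv₂
    have := hmin c (hsub.support_subset hc)
    have := hconn.dist_triangle (u := u) (v := v₂) (w := c)
    have : M * (Nat.log 2 r + 7) = 2 * M + M * (Nat.log 2 r + 4 + 1) := by ring
    omega

theorem slimTriangles (hconn : G.Connected) (hA : IsGuessingFamily G M A)
    (hconnA : ∀ x y, (G.induce (A x y)).Connected) :
    G.SlimTriangles (4 * 2 ^ (8 * (M + 1)) + M + 1) := by
  have hnear {a b : V} (γ : G.Walk a b) (hγ : γ.length = G.dist a b) :=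
    hA.exists_mem_support_dist_le hconn (fun _ => Nat.mul_log_add_seven_lt) γ hγ
  intro x y z γxy γxz γyz hxy hxz hyz w hw
  obtain ⟨u, hu, hwu⟩ := hconn.exists_mem_dist_le_of_induce_preconnected γxy hxy
    (hconnA x y).preconnected (hA.mem x y).1 (hA.mem x y).2 (hnear γxy hxy) w hw
  obtain ⟨v, hv | hv, huv⟩ := hA.exists_dist_le x y z u hu
  · obtain ⟨c, hc, hvc⟩ := hnear γxz hxz v hv
    have := hconn.dist_triangle (u := w) (v := u) (w := c)
    have := hconn.dist_triangle (u := u) (v := v) (w := c)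
    exact ⟨c, .inl hc, by omega⟩
  · obtain ⟨c, hc, hvc⟩ := hnear γyz hyz v hv
    have := hconn.dist_triangle (u := w) (v := u) (w := c)
    have := hconn.dist_triangle (u := u) (v := v) (w := c)
    exact ⟨c, .inr hc, by omega⟩

end IsGuessingFamily

end SimpleGraph

theorem guessing_geodesics_general (M : ℕ) :
    ∃ δ : ℕ, ∀ (V : Type) (G : SimpleGraph V), G.Connected →
      ∀ A : V → V → Set V,
        (∀ x y : V, x ∈ A x y ∧ y ∈ A x y) →
        (∀ x y : V, (G.induce (A x y)).Connected) →
        (∀ x y : V, G.dist x y ≤ 1 → ∀ u ∈ A x y, ∀ v ∈ A x y, G.dist u v ≤ M) →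
        (∀ x y z : V, ∀ u ∈ A x y, ∃ v ∈ A x z ∪ A y z, G.dist u v ≤ M) →
        ∀ x y z w : V, G.dist x y + G.dist z w ≤
          max (G.dist x z + G.dist y w) (G.dist x w + G.dist y z) + δ :=
  ⟨6 * (4 * 2 ^ (8 * (M + 1)) + M + 1) + 1, fun _ _ hconn _ hmem hconnA hdiam hthin =>
    hconn.dist_add_dist_le_max_add_of_slimTriangles
      (SimpleGraph.IsGuessingFamily.slimTriangles hconn ⟨hmem, hdiam, hthin⟩ hconnA)⟩

/-- Guessing geodesics criterion: if a connected graph admits, for every pair of vertices `x, y`,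
a connected subgraph `A x y` containing `x` and `y`, such that `A x y` has diameter at most `M`
when `d(x,y) ≤ 1` and the `A`-triangles are `M`-thin, then the graph is `δ`-hyperbolic (stated
via the four-point condition on the combinatorial metric) with `δ` depending only on `M`. -/
theorem guessing_geodesics (M : ℕ) (hM : 0 < M) :
    ∃ δ : ℕ, ∀ (V : Type) (G : SimpleGraph V), G.Connected →
      ∀ A : V → V → Set V,
        (∀ x y : V, x ∈ A x y ∧ y ∈ A x y) →
        (∀ x y : V, (G.induce (A x y)).Connected) →
        (∀ x y : V, G.dist x y ≤ 1 → ∀ u ∈ A x y, ∀ v ∈ A x y, G.dist u v ≤ M) →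
        (∀ x y z : V, ∀ u ∈ A x y, ∃ v ∈ A x z ∪ A y z, G.dist u v ≤ M) →
        ∀ x y z w : V, G.dist x y + G.dist z w ≤
          max (G.dist x z + G.dist y w) (G.dist x w + G.dist y z) + δ :=
  guessing_geodesics_general M
end

section
/- Let X be a compact metrizable totally disconnected space, F ⊆ X, and let e ∈ X be a point. Suppose there exist pairwise disjoint clopen sets V₀, V₁, V₂, … in X with e ∈ V₀, a point f ∉ ⋃ᵢ Vᵢ, and a decreasing sequence of clopen sets W₁ ⊇ W₂ ⊇ ⋯ with ⋂ᵢ Wᵢ = {f} and Vᵢ ⊆ Wᵢ for all i ≥ 1, together with homeomorphisms of pairs φ₀ : (U, U∩F) → (V₁, V₁∩F) for a given clopen U with e ∈ U ⊆ V₀, and φᵢ : (Vᵢ, Vᵢ∩F) → (Vᵢ₊₁, Vᵢ₊₁∩F) for all i ≥ 1. Then the map Φ : X → X \ U defined by Φ = φ₀ on U, Φ = φᵢ on Vᵢ for i ≥ 1, and Φ = identity elsewhere, is a homeomorphism of pairs (X, F) → (X \ U, F \ U). -/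
/-!
Put `P 0 = U` and `P n = Vₙ` for `n ≥ 1`. These are pairwise disjoint clopen sets, `Φ` carries
each `P n` homeomorphically onto `P (n + 1)` and fixes everything else, so `Φ` is a bijection of
`X` onto the complement of `P 0` which preserves membership in `F`. It is continuous on each piece
and near every point outside the pieces other than `f`, since the pieces converge to `f`: by
compactness the closed sets `Wₙ` shrink to their intersection `{f}`. At `f` itself, the finitely
many pieces not contained in a given neighbourhood of `f` can be avoided. A continuous bijection
from a compact space to a Hausdorff space is a homeomorphism.
-/

open Set Filter Topology Function

section Bijection

variable {α β ι : Type*}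

theorem Set.injOn_iUnion_of_pairwise_disjoint {s : ι → Set α} {t : ι → Set β} {f : α → β}
    (ht : Pairwise (Disjoint on t)) (hf : ∀ i, MapsTo f (s i) (t i))
    (hinj : ∀ i, InjOn f (s i)) : InjOn f (⋃ i, s i) := by
  intro x hx y hy hxy
  obtain ⟨i, hxi⟩ := mem_iUnion.1 hx
  obtain ⟨j, hyj⟩ := mem_iUnion.1 hy
  obtain rfl | hij := eq_or_ne i j
  · exact hinj i hxi hyj hxy
  · exact (disjoint_left.1 (ht hij) (hf i hxi) (hxy ▸ hf j hyj)).elim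

theorem Set.bijOn_iUnion_of_pairwise_disjoint {s : ι → Set α} {t : ι → Set β} {f : α → β}
    (ht : Pairwise (Disjoint on t)) (H : ∀ i, BijOn f (s i) (t i)) :
    BijOn f (⋃ i, s i) (⋃ i, t i) :=
  bijOn_iUnion H (injOn_iUnion_of_pairwise_disjoint ht (fun i => (H i).mapsTo) fun i => (H i).injOn)

theorem Equiv.bijOn_of_forall_eq {s : Set α} {t : Set β} (e : s ≃ t) {Φ : α → β}
    (hΦ : ∀ x : s, Φ x = e x) : BijOn Φ s t := by
  refine ⟨fun x hx => hΦ ⟨x, hx⟩ ▸ (e ⟨x, hx⟩).2, fun x hx y hy hxy => ?_,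
    fun y hy => ⟨e.symm ⟨y, hy⟩, (e.symm _).2, by rw [hΦ, e.apply_symm_apply]⟩⟩
  rw [hΦ ⟨x, hx⟩, hΦ ⟨y, hy⟩] at hxy
  exact congrArg Subtype.val (e.injective (Subtype.ext hxy))

theorem Set.bijOn_univ_compl_of_shift {P : ℕ → Set α} {Φ : α → α}
    (hP : Pairwise (Disjoint on P)) (hΦ : ∀ n, BijOn Φ (P n) (P (n + 1)))
    (hid : ∀ x ∉ ⋃ n, P n, Φ x = x) : BijOn Φ univ (P 0)ᶜ := by
  have hmove : BijOn Φ (⋃ n, P n) (⋃ n, P (n + 1)) :=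
    bijOn_iUnion_of_pairwise_disjoint (hP.comp_of_injective (add_left_injective 1)) hΦ
  have hfix : BijOn Φ (⋃ n, P n)ᶜ (⋃ n, P n)ᶜ :=
    (bijOn_id _).congr fun x hx => (hid x hx).symm
  have hinj : InjOn Φ ((⋃ n, P n) ∪ (⋃ n, P n)ᶜ) :=
    (injOn_union disjoint_compl_right).2 ⟨hmove.injOn, hfix.injOn, fun x hx y hy hxy =>
      hy (hid y hy ▸ hxy ▸ iUnion_subset (fun n => subset_iUnion P (n + 1)) (hmove.mapsTo hx))⟩
  have h0 : Disjoint (P 0) (⋃ n, P (n + 1)) :=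
    disjoint_iUnion_right.2 fun n => hP (Nat.succ_ne_zero n).symm
  convert hmove.union hfix hinj using 1
  · exact (union_compl_self _).symm
  · rw [← union_iUnion_nat_succ P]
    ext y
    have : y ∈ P 0 → y ∉ ⋃ n, P (n + 1) := fun h => disjoint_left.1 h0 h
    simp only [mem_compl_iff, mem_union] at this ⊢
    tauto

end Bijection

section Topological

variable {X Y : Type*} [TopologicalSpace X] [TopologicalSpace Y]

theorem Homeomorph.continuousOn_of_forall_eq {s : Set X} {t : Set Y} (e : s ≃ₜ t) {Φ : X → Y}
    (hΦ : ∀ x : s, Φ x = e x) : ContinuousOn Φ s :=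
  continuousOn_iff_continuous_domRestrict.2 <|
    (continuous_subtype_val.comp e.continuous).congr fun x => (hΦ x).symm

theorem tendsto_smallSets_of_antitone_of_iInter_eq_singleton [CompactSpace X] {ι : Type*}
    [SemilatticeSup ι] [Nonempty ι] {W : ι → Set X} {f : X} (hW : Antitone W)
    (hWc : ∀ i, IsClosed (W i)) (hWf : ⋂ i, W i = {f}) : Tendsto W atTop (𝓝 f).smallSets := by
  refine tendsto_smallSets_iff.2 fun O hO => ?_
  obtain ⟨i, hi⟩ := exists_subset_nhds_of_compactSpace hW.directed_ge hWc
    (by rw [hWf]; rintro x rfl; exact hO)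
  exact eventually_atTop.2 ⟨i, fun j hj => (hW hj).trans hi⟩

theorem eventually_forall_lt_notMem {P : ℕ → Set X} (hP : ∀ n, IsClosed (P n)) {x : X}
    (hx : x ∉ ⋃ n, P n) (N : ℕ) : ∀ᶠ y in 𝓝 x, ∀ n < N, y ∉ P n :=
  (eventually_all_finite (finite_lt_nat N)).2 fun n _ =>
    (hP n).isOpen_compl.mem_nhds fun h => hx (mem_iUnion_of_mem n h)

theorem eventually_notMem_iUnion_of_tendsto_smallSets [T2Space X] {P : ℕ → Set X} {f x : X}
    (hP : ∀ n, IsClosed (P n)) (hlim : Tendsto P atTop (𝓝 f).smallSets)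
    (hx : x ∉ ⋃ n, P n) (hxf : x ≠ f) : ∀ᶠ y in 𝓝 x, y ∉ ⋃ n, P n := by
  obtain ⟨s, hs, t, ht, hst⟩ := Filter.disjoint_iff.1 (disjoint_nhds_nhds.2 hxf)
  obtain ⟨N, hN⟩ := eventually_atTop.1 (tendsto_smallSets_iff.1 hlim t ht)
  filter_upwards [hs, eventually_forall_lt_notMem hP hx N] with y hys hy
  simp only [mem_iUnion, not_exists]
  intro n hn
  rcases lt_or_ge n N with h | h
  · exact hy n h hn
  · exact disjoint_left.1 hst hys (hN n h hn)

theorem continuousAt_of_shift_of_tendsto_smallSets {P : ℕ → Set X} {Φ : X → X} {f : X}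
    (hP : ∀ n, IsClosed (P n)) (hmaps : ∀ n, MapsTo Φ (P n) (P (n + 1)))
    (hid : ∀ x ∉ ⋃ n, P n, Φ x = x) (hf : f ∉ ⋃ n, P n)
    (hlim : Tendsto P atTop (𝓝 f).smallSets) : ContinuousAt Φ f := by
  intro O hO
  rw [hid f hf] at hO
  refine mem_map.2 ?_
  obtain ⟨N, hN⟩ := eventually_atTop.1 (tendsto_smallSets_iff.1 hlim O hO)
  filter_upwards [hO, eventually_forall_lt_notMem hP hf N] with y hyO hy
  by_cases hyP : y ∈ ⋃ n, P n
  · obtain ⟨n, hn⟩ := mem_iUnion.1 hyP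
    have hNn : N ≤ n := not_lt.1 fun h => hy n h hn
    exact hN (n + 1) (by omega) (hmaps n hn)
  · rwa [mem_preimage, hid y hyP]

theorem continuous_of_shift [T2Space X] {P : ℕ → Set X} {Φ : X → X} {f : X}
    (hP : ∀ n, IsClopen (P n)) (hcont : ∀ n, ContinuousOn Φ (P n))
    (hmaps : ∀ n, MapsTo Φ (P n) (P (n + 1))) (hid : ∀ x ∉ ⋃ n, P n, Φ x = x)
    (hf : f ∉ ⋃ n, P n) (hlim : Tendsto P atTop (𝓝 f).smallSets) : Continuous Φ := by
  refine continuous_iff_continuousAt.2 fun x => ?_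
  by_cases hx : x ∈ ⋃ n, P n
  · obtain ⟨n, hn⟩ := mem_iUnion.1 hx
    exact (hcont n).continuousAt ((hP n).isOpen.mem_nhds hn)
  obtain rfl | hxf := eq_or_ne x f
  · exact continuousAt_of_shift_of_tendsto_smallSets (fun n => (hP n).isClosed) hmaps hid hx hlim
  · exact continuousAt_id.congr <|
      (eventually_notMem_iUnion_of_tendsto_smallSets (fun n => (hP n).isClosed) hlim hx hxf).mono
        fun y hy => (hid y hy).symm

theorem Continuous.exists_homeomorph_of_bijOn [CompactSpace X] [T2Space Y] {Φ : X → Y}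
    {S : Set Y} (hΦ : Continuous Φ) (h : BijOn Φ univ S) :
    ∃ Ψ : X ≃ₜ S, ∀ x, (Ψ x : Y) = Φ x := by
  let e : X ≃ S := Equiv.ofBijective (fun x => ⟨Φ x, h.mapsTo trivial⟩)
    ⟨fun a b hab => h.injOn trivial trivial (congrArg Subtype.val hab),
      fun y => let ⟨x, _, hx⟩ := h.surjOn y.2; ⟨x, Subtype.ext hx⟩⟩
  have he : Continuous e := hΦ.subtype_mk _
  exact ⟨he.homeoOfEquivCompactToT2, fun _ => rfl⟩

theorem exists_homeomorph_compl_of_shift [CompactSpace X] [T2Space X] {P : ℕ → Set X}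
    {Φ : X → X} {f : X} {F : Set X} (hP : ∀ n, IsClopen (P n)) (hdisj : Pairwise (Disjoint on P))
    (hpiece : ∀ n, ∃ ψ : P n ≃ₜ P (n + 1), ∀ x : P n, Φ x = ψ x ∧ ((ψ x : X) ∈ F ↔ (x : X) ∈ F))
    (hid : ∀ x ∉ ⋃ n, P n, Φ x = x) (hf : f ∉ ⋃ n, P n)
    (hlim : Tendsto P atTop (𝓝 f).smallSets) :
    ∃ Ψ : X ≃ₜ ↥(P 0)ᶜ, (∀ x, (Ψ x : X) = Φ x) ∧ (fun x => (Ψ x : X)) '' F = F \ P 0 := by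
  choose ψ hψ using hpiece
  have hbij (n : ℕ) : BijOn Φ (P n) (P (n + 1)) :=
    (ψ n).toEquiv.bijOn_of_forall_eq fun x => (hψ n x).1
  have hbij_univ := bijOn_univ_compl_of_shift hdisj hbij hid
  obtain ⟨Ψ, hΨ⟩ := (continuous_of_shift hP
    (fun n => (ψ n).continuousOn_of_forall_eq fun x => (hψ n x).1)
    (fun n => (hbij n).mapsTo) hid hf hlim).exists_homeomorph_of_bijOn hbij_univ
  have hFinv : Φ ⁻¹' F = F := by
    ext x
    by_cases hx : x ∈ ⋃ n, P n
    · obtain ⟨n, hn⟩ := mem_iUnion.1 hx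
      rw [mem_preimage, (hψ n ⟨x, hn⟩).1]
      exact (hψ n ⟨x, hn⟩).2
    · rw [mem_preimage, hid x hx]
  refine ⟨Ψ, hΨ, ?_⟩
  calc (fun x => (Ψ x : X)) '' F = Φ '' (Φ ⁻¹' F) := by simp only [hΨ, hFinv]
    _ = F \ P 0 := by
      rw [image_preimage_eq_inter_range, ← image_univ, hbij_univ.image_eq, sdiff_eq]

end Topological

theorem shift_homeomorphism_general {X : Type*} [TopologicalSpace X] [CompactSpace X]
    [TopologicalSpace.MetrizableSpace X]
    (F : Set X) (f : X) (U : Set X) (V W : ℕ → Set X)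
    (hVclopen : ∀ i, IsClopen (V i)) (hVdisj : Pairwise (Function.onFun Disjoint V))
    (hf : f ∉ ⋃ i, V i)
    (hWclopen : ∀ i, IsClopen (W i)) (hWdec : ∀ i, W (i + 1) ⊆ W i)
    (hWinter : (⋂ i, W i) = {f}) (hVW : ∀ i, V (i + 1) ⊆ W (i + 1))
    (hUclopen : IsClopen U) (hUV : U ⊆ V 0)
    (φ₀ : ↥U ≃ₜ ↥(V 1)) (hφ₀ : ∀ x : U, ((x : X) ∈ F ↔ ((φ₀ x : X) ∈ F)))
    (φ : ∀ i : ℕ, ↥(V (i + 1)) ≃ₜ ↥(V (i + 2)))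
    (hφ : ∀ i (x : ↥(V (i + 1))), ((x : X) ∈ F ↔ ((φ i x : X) ∈ F)))
    (Φ : X → X)
    (hΦU : ∀ x (hx : x ∈ U), Φ x = φ₀ ⟨x, hx⟩)
    (hΦV : ∀ i x (hx : x ∈ V (i + 1)), Φ x = φ i ⟨x, hx⟩)
    (hΦid : ∀ x, x ∉ U → x ∉ ⋃ i, V (i + 1) → Φ x = x) :
    ∃ Ψ : X ≃ₜ ↥(Uᶜ), (∀ x, (Ψ x : X) = Φ x) ∧
      ((fun x => (Ψ x : X)) '' F = F \ U) := by
  set P := update V 0 U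
  have hP0 : P 0 = U := update_self 0 U V
  have hPs (n : ℕ) : P (n + 1) = V (n + 1) := update_of_ne (Nat.succ_ne_zero n) U V
  have hPV (n : ℕ) : P n ⊆ V n := by cases n <;> simp [P, hUV]
  have hpiece : ∀ n, ∃ ψ : P n ≃ₜ P (n + 1),
      ∀ x : P n, Φ x = ψ x ∧ ((ψ x : X) ∈ F ↔ (x : X) ∈ F) := by
    rintro (_ | n)
    · rw [hP0, hPs]
      exact ⟨φ₀, fun x => ⟨hΦU x x.2, (hφ₀ x).symm⟩⟩
    · rw [hPs, hPs]
      exact ⟨φ n, fun x => ⟨hΦV n x x.2, (hφ n x).symm⟩⟩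
  have hid (x : X) (hx : x ∉ ⋃ n, P n) : Φ x = x := by
    rw [← union_iUnion_nat_succ, hP0] at hx
    simp only [hPs, mem_union, not_or] at hx
    exact hΦid x hx.1 hx.2
  have hlim : Tendsto P atTop (𝓝 f).smallSets :=
    (tendsto_smallSets_of_antitone_of_iInter_eq_singleton (antitone_nat_of_succ_le hWdec)
      (fun n => (hWclopen n).isClosed) hWinter).smallSets_mono
      (eventually_atTop.2 ⟨1, fun n hn => by
        obtain ⟨m, rfl⟩ := Nat.exists_eq_add_of_le' hn; rw [hPs]; exact hVW m⟩)
  have hshift := exists_homeomorph_compl_of_shift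
    (fun n => by cases n <;> simp [P, hUclopen, hVclopen])
    (hVdisj.mono fun i j h => h.mono (hPV i) (hPV j)) hpiece hid
    (fun h => hf (iUnion_mono hPV h)) hlim
  rwa [hP0] at hshift

/-- The shift map built from a sequence of pairwise disjoint clopen sets accumulating at a
fixed point `f`, defined by `φ₀` on `U`, `φᵢ` on `Vᵢ` (`i ≥ 1`) and the identity elsewhere,
is a homeomorphism of pairs `(X, F) → (X \ U, F \ U)`. -/
theorem shift_homeomorphism {X : Type*} [TopologicalSpace X] [CompactSpace X]
    [TopologicalSpace.MetrizableSpace X] [TotallyDisconnectedSpace X]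
    (F : Set X) (e f : X) (U : Set X) (V W : ℕ → Set X)
    (hVclopen : ∀ i, IsClopen (V i)) (hVdisj : Pairwise (Function.onFun Disjoint V))
    (heV : e ∈ V 0) (hf : f ∉ ⋃ i, V i)
    (hWclopen : ∀ i, IsClopen (W i)) (hWdec : ∀ i, W (i + 1) ⊆ W i)
    (hWinter : (⋂ i, W i) = {f}) (hVW : ∀ i, V (i + 1) ⊆ W (i + 1))
    (hUclopen : IsClopen U) (heU : e ∈ U) (hUV : U ⊆ V 0)
    (φ₀ : ↥U ≃ₜ ↥(V 1)) (hφ₀ : ∀ x : U, ((x : X) ∈ F ↔ ((φ₀ x : X) ∈ F)))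
    (φ : ∀ i : ℕ, ↥(V (i + 1)) ≃ₜ ↥(V (i + 2)))
    (hφ : ∀ i (x : ↥(V (i + 1))), ((x : X) ∈ F ↔ ((φ i x : X) ∈ F)))
    (Φ : X → X)
    (hΦU : ∀ x (hx : x ∈ U), Φ x = φ₀ ⟨x, hx⟩)
    (hΦV : ∀ i x (hx : x ∈ V (i + 1)), Φ x = φ i ⟨x, hx⟩)
    (hΦid : ∀ x, x ∉ U → x ∉ ⋃ i, V (i + 1) → Φ x = x) :
    ∃ Ψ : X ≃ₜ ↥(Uᶜ), (∀ x, (Ψ x : X) = Φ x) ∧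
      ((fun x => (Ψ x : X)) '' F = F \ U) :=
  shift_homeomorphism_general F f U V W hVclopen hVdisj hf hWclopen hWdec hWinter hVW hUclopen hUV
    φ₀ hφ₀ φ hφ Φ hΦU hΦV hΦid
end
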